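/- arXiv:2211.09864 — 3 statements merged into one kernel-verified Lean document; each statement's English description precedes it below -/
import Mathlib

section
/- Let V be a finite type with |V| = n and let m_R, m_S : V → ℕ be multiplicity functions. Let f̂_R, f̂_S : Fin n → ℝ be nonnegative non-increasing sequences such that for every i, the sum of the i largest values of m_R is at most Σ_{j ≤ i} f̂_R(j), and the sum of the i largest values of m_S is at most Σ_{j ≤ i} f̂_S(j). Then Σ_{v ∈ V} m_R(v)·m_S(v) ≤ Σ_{i} f̂_R(i)·f̂_S(i). -/
/-!
Sort both multiplicity columns in non-increasing order. By the rearrangement inequality the join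
size is at most the inner product `∑ rR i * rS i` of the two sorted sequences. Summation by parts
expresses `∑ a i * g i`, for `g` non-increasing and nonnegative, as a nonnegative combination of
the partial sums of `a`; since the partial sums of a sorted column are sums of top values, they are
dominated by those of the compression. Hence `rR` may be replaced by `fhatR` against the weights
`rS`, and then `rS` by `fhatS` against the weights `fhatR`.
-/

open Finset Function

/-- The sum of the `i` largest values of `m`, i.e. the maximum over all sets of
at most `i` elements of the total value of `m` on that set. -/
def sumTop {V : Type*} [Fintype V] (m : V → ℕ) (i : ℕ) : ℕ :=
  ((Finset.univ : Finset V).powerset.filter (fun T => T.card ≤ i)).sup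
    (fun T => ∑ v ∈ T, m v)

section ExtendByZero

variable {n : ℕ} {M : Type*}

theorem Fin.extend_val_of_not_lt [Zero M] (f : Fin n → M) {k : ℕ} (hk : ¬k < n) :
    extend Fin.val f 0 k = 0 :=
  extend_apply' _ _ _ (by rintro ⟨j, rfl⟩; exact hk j.isLt)

theorem Fin.sum_range_extend_val_mul [NonUnitalNonAssocSemiring M] (f g : Fin n → M) :
    ∑ k ∈ range n, extend Fin.val f 0 k * extend Fin.val g 0 k = ∑ i, f i * g i := by
  rw [← Fin.sum_univ_eq_sum_range (fun k => extend Fin.val f 0 k * extend Fin.val g 0 k)]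
  simp [Fin.val_injective.extend_apply]

theorem Fin.sum_range_succ_extend_val [AddCommMonoid M] (f : Fin n → M) (i : Fin n) :
    ∑ k ∈ range (i + 1), extend Fin.val f 0 k = ∑ j ∈ Iic i, f j := by
  rw [Nat.range_succ_eq_Iic, ← Fin.map_valEmbedding_Iic, sum_map]
  simp [Fin.val_injective.extend_apply]

variable [Zero M] [Preorder M]

theorem Fin.extend_val_nonneg {f : Fin n → M} (hf0 : 0 ≤ f) : 0 ≤ extend Fin.val f 0 := by
  intro k
  by_cases hk : k < n
  · rw [Fin.val_injective.extend_apply f 0 ⟨k, hk⟩]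
    exact hf0 _
  · rw [Fin.extend_val_of_not_lt f hk, Pi.zero_apply]

theorem Fin.antitone_extend_val {f : Fin n → M} (hf : Antitone f) (hf0 : 0 ≤ f) :
    Antitone (extend Fin.val f 0) := by
  intro k l hkl
  by_cases hl : l < n
  · rw [Fin.val_injective.extend_apply f 0 ⟨l, hl⟩,
      Fin.val_injective.extend_apply f 0 ⟨k, hkl.trans_lt hl⟩]
    exact hf hkl
  · rw [Fin.extend_val_of_not_lt f hl]
    exact Fin.extend_val_nonneg hf0 k

end ExtendByZero

section AbelComparison

variable {R : Type*} [CommRing R] [PartialOrder R] [IsOrderedRing R]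

theorem sum_range_mul_le_of_sum_range_le {a b g : ℕ → R} {n : ℕ} (hg : Antitone g)
    (hg0 : 0 ≤ g) (hab : ∀ i ≤ n, ∑ j ∈ range i, a j ≤ ∑ j ∈ range i, b j) :
    ∑ i ∈ range n, a i * g i ≤ ∑ i ∈ range n, b i * g i := by
  have by_parts (c : ℕ → R) := sum_range_by_parts g c n
  simp only [smul_eq_mul] at by_parts
  simp only [mul_comm _ (g _)]
  rw [by_parts a, by_parts b]
  refine sub_le_sub (mul_le_mul_of_nonneg_left (hab n le_rfl) (hg0 _)) (sum_le_sum ?_)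
  intro i hi
  exact mul_le_mul_of_nonpos_left (hab (i + 1) (by grind))
    (sub_nonpos.2 (hg i.le_succ))

theorem Fin.sum_mul_le_of_sum_Iic_le {n : ℕ} {a b g : Fin n → R} (hg : Antitone g)
    (hg0 : 0 ≤ g) (hab : ∀ i, ∑ j ∈ Iic i, a j ≤ ∑ j ∈ Iic i, b j) :
    ∑ i, a i * g i ≤ ∑ i, b i * g i := by
  rw [← Fin.sum_range_extend_val_mul, ← Fin.sum_range_extend_val_mul]
  refine sum_range_mul_le_of_sum_range_le (Fin.antitone_extend_val hg hg0)
    (Fin.extend_val_nonneg hg0) fun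
      | 0, _ => by simp
      | k + 1, hk => ?_
  have := hab ⟨k, hk⟩
  rwa [← Fin.sum_range_succ_extend_val, ← Fin.sum_range_succ_extend_val] at this

end AbelComparison

theorem sum_le_sumTop {V : Type*} [Fintype V] (m : V → ℕ) {s : Finset V} {i : ℕ}
    (hs : #s ≤ i) : ∑ v ∈ s, m v ≤ sumTop m i :=
  le_sup (f := fun T => ∑ v ∈ T, m v) (by simp [hs])

theorem sum_Iic_le_sumTop {V : Type*} [Fintype V] (m : V → ℕ) (e : Fin (Fintype.card V) ≃ V)
    (i : Fin (Fintype.card V)) : ∑ j ∈ Iic i, m (e j) ≤ sumTop m (i + 1) := by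
  simpa using sum_le_sumTop m (s := (Iic i).map e.toEmbedding) (by simp)

theorem exists_equiv_fin_antitone {V α : Type*} [Fintype V] [LinearOrder α] (m : V → α) :
    ∃ e : Fin (Fintype.card V) ≃ V, Antitone (m ∘ e) := by
  set e₀ := (Fintype.equivFin V).symm
  exact ⟨Fin.revPerm.trans ((Tuple.sort (m ∘ e₀)).trans e₀),
    fun i j hij => Tuple.monotone_sort (m ∘ e₀) (Fin.rev_le_rev.2 hij)⟩

theorem sum_mul_le_sum_mul_of_antitone_comp {ι κ R : Type*} [Fintype ι] [Fintype κ]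
    [LinearOrder κ] [CommRing R] [LinearOrder R] [IsStrictOrderedRing R] {f g : ι → R}
    (e e' : κ ≃ ι) (hf : Antitone (f ∘ e)) (hg : Antitone (g ∘ e')) :
    ∑ i, f i * g i ≤ ∑ k, f (e k) * g (e' k) := by
  rw [← e.sum_comp]
  simpa using (hf.monovary hg).sum_mul_comp_perm_le_sum_mul (σ := e.trans e'.symm)

theorem stmt_6_general (V : Type*) [Fintype V]
    (mR mS : V → ℕ) (fhatR fhatS : Fin (Fintype.card V) → ℝ)
    (hRpos : ∀ i, 0 ≤ fhatR i)
    (hRanti : Antitone fhatR)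
    (hRdom : ∀ i : Fin (Fintype.card V),
      (sumTop mR ((i : ℕ) + 1) : ℝ) ≤ ∑ j ∈ Finset.Iic i, fhatR j)
    (hSdom : ∀ i : Fin (Fintype.card V),
      (sumTop mS ((i : ℕ) + 1) : ℝ) ≤ ∑ j ∈ Finset.Iic i, fhatS j) :
    ((∑ v, mR v * mS v : ℕ) : ℝ) ≤ ∑ i, fhatR i * fhatS i := by
  obtain ⟨eR, hR⟩ := exists_equiv_fin_antitone mR
  obtain ⟨eS, hS⟩ := exists_equiv_fin_antitone mS
  have dominates (m : V → ℕ) (e : Fin (Fintype.card V) ≃ V) (f : Fin (Fintype.card V) → ℝ)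
      (hf : ∀ i : Fin (Fintype.card V), (sumTop m (i + 1) : ℝ) ≤ ∑ j ∈ Iic i, f j)
      (i : Fin (Fintype.card V)) : ∑ j ∈ Iic i, (m (e j) : ℝ) ≤ ∑ j ∈ Iic i, f j := by
    refine le_trans ?_ (hf i)
    exact_mod_cast sum_Iic_le_sumTop m e i
  calc ((∑ v, mR v * mS v : ℕ) : ℝ)
      = ∑ v, (mR v : ℝ) * mS v := by simp only [Nat.cast_sum, Nat.cast_mul]
    _ ≤ ∑ i, (mR (eR i) : ℝ) * mS (eS i) :=
      sum_mul_le_sum_mul_of_antitone_comp eR eS (Nat.mono_cast.comp_antitone hR)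
        (Nat.mono_cast.comp_antitone hS)
    _ ≤ ∑ i, fhatR i * mS (eS i) :=
      Fin.sum_mul_le_of_sum_Iic_le (Nat.mono_cast.comp_antitone hS)
        (fun i => Nat.cast_nonneg _) (dominates mR eR fhatR hRdom)
    _ = ∑ i, (mS (eS i) : ℝ) * fhatR i := by simp_rw [mul_comm]
    _ ≤ ∑ i, fhatS i * fhatR i :=
      Fin.sum_mul_le_of_sum_Iic_le hRanti hRpos (dominates mS eS fhatS hSdom)
    _ = ∑ i, fhatR i * fhatS i := by simp_rw [mul_comm]

/-- Two-relation instance of Theorem 2: valid compressions of the cumulative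
degree sequences (non-increasing, nonnegative sequences whose partial sums
dominate the sums of top multiplicities) still upper bound the join size. -/
theorem stmt_6 (V : Type*) [Fintype V]
    (mR mS : V → ℕ) (fhatR fhatS : Fin (Fintype.card V) → ℝ)
    (hRpos : ∀ i, 0 ≤ fhatR i) (hSpos : ∀ i, 0 ≤ fhatS i)
    (hRanti : Antitone fhatR) (hSanti : Antitone fhatS)
    (hRdom : ∀ i : Fin (Fintype.card V),
      (sumTop mR ((i : ℕ) + 1) : ℝ) ≤ ∑ j ∈ Finset.Iic i, fhatR j)
    (hSdom : ∀ i : Fin (Fintype.card V),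
      (sumTop mS ((i : ℕ) + 1) : ℝ) ≤ ∑ j ∈ Finset.Iic i, fhatS j) :
    ((∑ v, mR v * mS v : ℕ) : ℝ) ≤ ∑ i, fhatR i * fhatS i :=
  stmt_6_general V mR mS fhatR fhatS hRpos hRanti hRdom hSdom
end

section
/- Let S be a finite multiset of pairs over a type V₁ × V₂, and let S₁ be its projection to the first coordinate (the multiset image under the first projection). Then for every i ∈ ℕ, F_S(i) ≤ F_{S₁}(i), where F_T(i) denotes the sum of the i largest multiplicities among the distinct elements of the multiset T. -/
/-- The cumulative degree sequence of a finite multiset `S`: `multisetCDS S i`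
is the sum of the `i` largest multiplicities among the distinct elements of
`S`, i.e. the maximum over all sets `T` of at most `i` distinct elements of the
total multiplicity of `T` in `S`. -/
def multisetCDS {V : Type*} [DecidableEq V] (S : Multiset V) (i : ℕ) : ℕ :=
  (S.toFinset.powerset.filter (fun T => T.card ≤ i)).sup
    (fun T => ∑ v ∈ T, S.count v)

/-!
Any set `T` of at most `i` keys of `S` maps under `f` to a set `f '' T` of at most `i` keys of
`S.map f`, and every element of `S` with key in `T` has its image key in `f '' T`; so the total
multiplicity of `T` in `S` is at most that of `f '' T` in `S.map f`, which is at most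
`multisetCDS (S.map f) i`.
-/

section

variable {α β : Type*} [DecidableEq α]

theorem Multiset.sum_count_eq_card_filter_mem (S : Multiset α) (T : Finset α) :
    ∑ v ∈ T, S.count v = card (S.filter (· ∈ T)) := by
  rw [← Multiset.sum_count_eq_card (s := T) (fun a ha => (Multiset.mem_filter.mp ha).2)]
  exact Finset.sum_congr rfl fun v hv => (Multiset.count_filter_of_pos hv).symm

theorem Multiset.sum_count_le_sum_count_map_image [DecidableEq β] (f : α → β)
    (S : Multiset α) (T : Finset α) :
    ∑ v ∈ T, S.count v ≤ ∑ u ∈ T.image f, (S.map f).count u := by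
  rw [Multiset.sum_count_eq_card_filter_mem, Multiset.sum_count_eq_card_filter_mem,
    Multiset.filter_map, Multiset.card_map]
  exact Multiset.card_le_card <|
    Multiset.monotone_filter_right S fun v hv => Finset.mem_image_of_mem f hv

theorem sum_count_le_multisetCDS {S : Multiset α} {T : Finset α} {i : ℕ} (hT : T.card ≤ i) :
    ∑ v ∈ T, S.count v ≤ multisetCDS S i := by
  have hsum : ∑ v ∈ T with v ∈ S.toFinset, S.count v = ∑ v ∈ T, S.count v :=
    Finset.sum_filter_of_ne fun v _ hv => Multiset.mem_toFinset.mpr (Multiset.count_ne_zero.mp hv)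
  rw [← hsum]
  refine Finset.le_sup (f := fun T => ∑ v ∈ T, S.count v) ?_
  simp only [Finset.mem_filter, Finset.mem_powerset]
  exact ⟨fun v hv => (Finset.mem_filter.mp hv).2, (Finset.card_filter_le _ _).trans hT⟩

theorem multisetCDS_le_multisetCDS_map [DecidableEq β] (f : α → β) (S : Multiset α) (i : ℕ) :
    multisetCDS S i ≤ multisetCDS (S.map f) i := by
  refine Finset.sup_le fun T hT => ?_
  have hcard : (T.image f).card ≤ i :=
    Finset.card_image_le.trans (Finset.mem_filter.mp hT).2
  exact (Multiset.sum_count_le_sum_count_map_image f S T).trans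
    (sum_count_le_multisetCDS hcard)

end

/-- Multi-column joins (Section 3.6): the CDS of a single column dominates the
CDS of the compound key formed by a set of columns. -/
theorem stmt_9 {V₁ V₂ : Type*} [DecidableEq V₁] [DecidableEq V₂]
    (S : Multiset (V₁ × V₂)) :
    ∀ i : ℕ, multisetCDS S i ≤ multisetCDS (S.map Prod.fst) i :=
  multisetCDS_le_multisetCDS_map Prod.fst S
end

section
/- Let f : ℝ → ℝ be k-piecewise linear on an interval (u₀, u_k] (with dividers u₀ < u₁ < ⋯ < u_k and f(x) = a_ℓ·x + b_ℓ on (u_{ℓ-1}, u_ℓ]), and let g : ℝ → ℝ be a monotone non-decreasing l-piecewise linear function on an interval (m₀, m_l] whose range is contained in (u₀, u_k]. Then the composition f ∘ g is piecewise linear on (m₀, m_l] with at most k + l segments. -/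
/-- `f` is `k`-piecewise linear on the interval `(s, t]`: there are dividers
`s = u 0 < u 1 < ⋯ < u k = t` and coefficients `a ℓ, b ℓ` with
`f x = a ℓ * x + b ℓ` on each `(u (ℓ-1), u ℓ]`. -/
def IsPiecewiseLinearOn (f : ℝ → ℝ) (s t : ℝ) (k : ℕ) : Prop :=
  ∃ (u a b : ℕ → ℝ),
    u 0 = s ∧ u k = t ∧ (∀ ℓ < k, u ℓ < u (ℓ + 1)) ∧
    ∀ ℓ, 1 ≤ ℓ → ℓ ≤ k → ∀ x ∈ Set.Ioc (u (ℓ - 1)) (u ℓ), f x = a ℓ * x + b ℓ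

/-!
Index a point `x` of `(m₀, ml]` by `φ x = j x + i (g x)`, where `j x` is the piece of `g`
containing `x` and `i y` the piece of `f` containing `y`. Both summands are monotone because `g`
is, so `φ` is monotone with values in `[1, k + l]`, and on a level set of `φ` both indices are
constant, which makes `f ∘ g` affine there. A level set is an interval `(α, β]`: it is closed on
the right because `g` is affine, hence continuous, on each of its pieces. So the level sets cut
`(m₀, ml]` into at most `k + l` pieces.
-/

open Set

namespace IsPiecewiseLinearOn

variable {F : ℝ → ℝ}

theorem zero (s : ℝ) : IsPiecewiseLinearOn F s s 0 :=
  ⟨fun _ => s, 0, 0, rfl, rfl, by simp, by omega⟩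

theorem of_affine {s t A B : ℝ} (hst : s < t) (hF : ∀ x ∈ Ioc s t, F x = A * x + B) :
    IsPiecewiseLinearOn F s t 1 := by
  refine ⟨fun i => if i = 0 then s else t, fun _ => A, fun _ => B, rfl, rfl, by simpa, ?_⟩
  intro ℓ h₁ h₂ x hx
  obtain rfl : ℓ = 1 := by omega
  exact hF x (by simpa using hx)

theorem append {s r t : ℝ} {k₁ k₂ : ℕ}
    (h₁ : IsPiecewiseLinearOn F s r k₁) (h₂ : IsPiecewiseLinearOn F r t k₂) :
    IsPiecewiseLinearOn F s t (k₁ + k₂) := by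
  obtain ⟨u, a, b, hu0, huk, hu, hua⟩ := h₁
  obtain ⟨v, c, d, hv0, hvk, hv, hvc⟩ := h₂
  set w : ℕ → ℝ := fun i => if i ≤ k₁ then u i else v (i - k₁)
  have hw : ∀ i, k₁ ≤ i → w i = v (i - k₁) := by
    intro i hi
    by_cases h : i ≤ k₁
    · obtain rfl : i = k₁ := le_antisymm h hi
      simp [w, huk, hv0]
    · simp [w, h]
  refine ⟨w, fun i => if i ≤ k₁ then a i else c (i - k₁),
    fun i => if i ≤ k₁ then b i else d (i - k₁), by simpa [w] using hu0,
    by rw [hw _ le_self_add, Nat.add_sub_cancel_left, hvk], fun ℓ hℓ => ?_, fun ℓ h1 h2 x hx => ?_⟩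
  · by_cases h : ℓ + 1 ≤ k₁
    · simpa [w, h, show ℓ ≤ k₁ by omega] using hu ℓ h
    · rw [hw _ (by omega), hw _ (by omega), show ℓ + 1 - k₁ = ℓ - k₁ + 1 by omega]
      exact hv _ (by omega)
  · by_cases h : ℓ ≤ k₁
    · simp only [w, h, show ℓ - 1 ≤ k₁ by omega, if_true] at hx ⊢
      exact hua ℓ h1 h x hx
    · rw [hw _ (by omega), hw _ (by omega), show ℓ - 1 - k₁ = ℓ - k₁ - 1 by omega] at hx
      simp only [h, if_false]
      exact hvc _ (by omega) (by omega) x hx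

end IsPiecewiseLinearOn

theorem exists_isPiecewiseLinearOn_le_of_levelSets {F : ℝ → ℝ} {φ : ℝ → ℕ} {s t : ℝ} {n N : ℕ}
    (hst : s ≤ t) (hφ : MonotoneOn φ (Ioc s t)) (hφn : MapsTo φ (Ioc s t) (Ico n (n + N)))
    (hmax : ∀ x ∈ Ioc s t, ∃ β ∈ Icc x t, φ β = φ x ∧ ∀ y ∈ Ioc β t, φ y ≠ φ x)
    (haff : ∀ x ∈ Ioc s t, ∃ A B : ℝ, ∀ y ∈ Ioc s t, φ y = φ x → F y = A * y + B) :
    ∃ k' ≤ N, IsPiecewiseLinearOn F s t k' := by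
  induction N generalizing s n with
  | zero =>
    obtain rfl : s = t := hst.eq_of_not_lt fun h => by simpa using hφn ⟨h, le_rfl⟩
    exact ⟨0, le_rfl, .zero s⟩
  | succ N ih =>
    -- Peel off the lowest level set `{φ = n}`, which is an interval `(s, β]`.
    by_cases hn : ∃ x ∈ Ioc s t, φ x = n
    · obtain ⟨x, hx, rfl⟩ := hn
      obtain ⟨β, ⟨hxβ, hβt⟩, hβx, hβmax⟩ := hmax x hx
      obtain ⟨A, B, hAB⟩ := haff x hx
      have hsub : Ioc β t ⊆ Ioc s t := Ioc_subset_Ioc_left (hx.1.le.trans hxβ)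
      have hfirst : IsPiecewiseLinearOn F s β 1 := by
        refine .of_affine (hx.1.trans_le hxβ) fun y hy => hAB y ⟨hy.1, hy.2.trans hβt⟩ ?_
        have := hφ ⟨hy.1, hy.2.trans hβt⟩ ⟨hx.1.trans_le hxβ, hβt⟩ hy.2
        exact le_antisymm (hβx ▸ this) (hφn ⟨hy.1, hy.2.trans hβt⟩).1
      obtain ⟨k', hk', hrest⟩ := ih (s := β) (n := φ x + 1) hβt (hφ.mono hsub)
        (fun y hy => ⟨Nat.succ_le_of_lt ((hφn (hsub hy)).1.lt_of_ne' (hβmax y hy)), by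
          have := (hφn (hsub hy)).2; omega⟩)
        (fun y hy => hmax y (hsub hy))
        (fun y hy => (haff y (hsub hy)).imp fun A ⟨B, h⟩ => ⟨B, fun z hz => h z (hsub hz)⟩)
      exact ⟨1 + k', by omega, hfirst.append hrest⟩
    · obtain ⟨k', hk', h⟩ := ih (n := n + 1) hst hφ
        (fun y hy => ⟨Nat.succ_le_of_lt ((hφn hy).1.lt_of_ne' fun h => hn ⟨y, hy, h⟩), by
          have := (hφn hy).2; omega⟩) hmax haff
      exact ⟨k', by omega, h⟩

/-- The index `i` of the piece `(u (i - 1), u i]` containing `y`, for `y ∈ (u 0, u k]`. -/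
noncomputable def pieceIndex (u : ℕ → ℝ) (k : ℕ) (y : ℝ) : ℕ :=
  open Classical in
  Nat.find (⟨k, Or.inr le_rfl⟩ : ∃ i, y ≤ u i ∨ k ≤ i)

section pieceIndex

variable {u : ℕ → ℝ} {k : ℕ} {y : ℝ}

theorem pieceIndex_le : pieceIndex u k y ≤ k :=
  Nat.find_min' _ (Or.inr le_rfl)

theorem pieceIndex_mono : Monotone (pieceIndex u k) :=
  fun _ _ h => Nat.find_mono fun _ hi => hi.imp h.trans id

theorem one_le_pieceIndex_and_mem_Ioc (hy : y ∈ Ioc (u 0) (u k)) :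
    1 ≤ pieceIndex u k y ∧ y ∈ Ioc (u (pieceIndex u k y - 1)) (u (pieceIndex u k y)) := by
  classical
  have hle : y ≤ u (pieceIndex u k y) := by
    rcases Nat.find_spec (⟨k, Or.inr le_rfl⟩ : ∃ i, y ≤ u i ∨ k ≤ i) with h | h
    · exact h
    · rw [show pieceIndex u k y = k from pieceIndex_le.antisymm h]; exact hy.2
  have hpos : 1 ≤ pieceIndex u k y :=
    Nat.one_le_iff_ne_zero.2 fun h => (show y ≤ u 0 from h ▸ hle).not_gt hy.1
  have hlt := Nat.find_min (⟨k, Or.inr le_rfl⟩ : ∃ i, y ≤ u i ∨ k ≤ i)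
    (Nat.sub_lt hpos one_pos)
  exact ⟨hpos, lt_of_not_ge fun h => hlt (Or.inl h), hle⟩

theorem pieceIndex_eq (hu : StrictMonoOn u (Iic k)) {i : ℕ} (hi : 1 ≤ i) (hik : i ≤ k)
    (hy : y ∈ Ioc (u (i - 1)) (u i)) : pieceIndex u k y = i := by
  classical
  refine (Nat.find_min' _ (Or.inl hy.2)).antisymm ((Nat.le_find_iff _ _).2 fun j hj => ?_)
  rintro (h | h)
  · have := hu.monotoneOn (show j ∈ Iic k by simp; omega) (show i - 1 ∈ Iic k by simp; omega)
      (by omega : j ≤ i - 1)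
    linarith [hy.1]
  · omega

theorem eq_affine_pieceIndex {f : ℝ → ℝ} {a b : ℕ → ℝ}
    (hf : ∀ ℓ, 1 ≤ ℓ → ℓ ≤ k → ∀ x ∈ Ioc (u (ℓ - 1)) (u ℓ), f x = a ℓ * x + b ℓ)
    (hy : y ∈ Ioc (u 0) (u k)) :
    f y = a (pieceIndex u k y) * y + b (pieceIndex u k y) :=
  hf _ (one_le_pieceIndex_and_mem_Ioc hy).1 pieceIndex_le y (one_le_pieceIndex_and_mem_Ioc hy).2

end pieceIndex

theorem exists_isGreatest_Icc_affine_le {c d v x q : ℝ} (hxq : x ≤ q) (hx : c * x + d ≤ v) :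
    ∃ β, IsGreatest {y ∈ Icc x q | c * y + d ≤ v} β :=
  (isCompact_Icc.inter_right (isClosed_le (f := fun y => c * y + d) (by fun_prop)
    continuous_const)).exists_isGreatest ⟨x, ⟨le_rfl, hxq⟩, hx⟩

theorem MonotoneOn.eq_and_eq_of_add_eq {α : Type*} [LinearOrder α] {s : Set α} {φ ψ : α → ℕ}
    (hφ : MonotoneOn φ s) (hψ : MonotoneOn ψ s) {x y : α} (hx : x ∈ s) (hy : y ∈ s)
    (h : φ x + ψ x = φ y + ψ y) : φ x = φ y ∧ ψ x = ψ y := by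
  rcases le_total x y with hxy | hxy
  · have := hφ hx hy hxy; have := hψ hx hy hxy; omega
  · have := hφ hy hx hxy; have := hψ hy hx hxy; omega

theorem exists_max_levelSet_pieceIndex_add {g : ℝ → ℝ} {k l : ℕ}
    {u m c d : ℕ → ℝ} (hu : StrictMonoOn u (Iic k)) (hm : StrictMonoOn m (Iic l))
    (hgc : ∀ ℓ, 1 ≤ ℓ → ℓ ≤ l → ∀ x ∈ Ioc (m (ℓ - 1)) (m ℓ), g x = c ℓ * x + d ℓ)
    (hgmono : MonotoneOn g (Ioc (m 0) (m l)))
    (hrange : MapsTo g (Ioc (m 0) (m l)) (Ioc (u 0) (u k))) {x : ℝ} (hx : x ∈ Ioc (m 0) (m l)) :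
    ∃ β ∈ Icc x (m l), pieceIndex m l β + pieceIndex u k (g β) =
        pieceIndex m l x + pieceIndex u k (g x) ∧
      ∀ y ∈ Ioc β (m l), pieceIndex m l y + pieceIndex u k (g y) ≠
        pieceIndex m l x + pieceIndex u k (g x) := by
  set j := pieceIndex m l x
  set i := pieceIndex u k (g x)
  obtain ⟨hj, hxj⟩ := one_le_pieceIndex_and_mem_Ioc hx
  obtain ⟨hi, hgxi⟩ := one_le_pieceIndex_and_mem_Ioc (hrange hx)
  have hgx : g x = c j * x + d j := eq_affine_pieceIndex hgc hx
  -- To the right of `x`, the level set of `(j, i)` is `{y ∈ [x, m j] | c j * y + d j ≤ u i}`.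
  obtain ⟨β, ⟨⟨hxβ, hβj⟩, hβi⟩, hβmax⟩ := exists_isGreatest_Icc_affine_le hxj.2
    (hgx.symm.trans_le hgxi.2)
  have hβ : β ∈ Ioc (m 0) (m l) :=
    ⟨hx.1.trans_le hxβ, hβj.trans (hm.monotoneOn pieceIndex_le self_mem_Iic pieceIndex_le)⟩
  have hβJ : pieceIndex m l β = j := pieceIndex_eq hm hj pieceIndex_le ⟨hxj.1.trans_le hxβ, hβj⟩
  have hgβ : g β = c j * β + d j := hβJ ▸ eq_affine_pieceIndex hgc hβ
  have hβI : pieceIndex u k (g β) = i :=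
    pieceIndex_eq hu hi pieceIndex_le ⟨hgxi.1.trans_le (hgmono hx hβ hxβ), hgβ ▸ hβi⟩
  refine ⟨β, ⟨hxβ, hβ.2⟩, by rw [hβJ, hβI], fun y hy hyx => ?_⟩
  have hy' : y ∈ Ioc (m 0) (m l) := ⟨hβ.1.trans hy.1, hy.2⟩
  obtain ⟨hyJ, hyI⟩ : _ ∧ pieceIndex u k (g y) = i :=
    (pieceIndex_mono.monotoneOn _).eq_and_eq_of_add_eq (pieceIndex_mono.comp_monotoneOn hgmono)
      hy' hx hyx
  have hyj := (one_le_pieceIndex_and_mem_Ioc hy').2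
  have hgyi := (one_le_pieceIndex_and_mem_Ioc (hrange hy')).2
  rw [hyJ] at hyj
  rw [hyI, eq_affine_pieceIndex hgc hy', hyJ] at hgyi
  linarith [hy.1, hβmax ⟨⟨hxβ.trans hy.1.le, hyj.2⟩, hgyi.2⟩]

theorem stmt_13_general (f g : ℝ → ℝ) (k l : ℕ)
    (u₀ uk m₀ ml : ℝ)
    (hf : IsPiecewiseLinearOn f u₀ uk k)
    (hg : IsPiecewiseLinearOn g m₀ ml l)
    (hgmono : MonotoneOn g (Set.Ioc m₀ ml))
    (hrange : Set.MapsTo g (Set.Ioc m₀ ml) (Set.Ioc u₀ uk)) :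
    ∃ k' ≤ k + l, IsPiecewiseLinearOn (f ∘ g) m₀ ml k' := by
  obtain ⟨u, a, b, rfl, rfl, hu, hfa⟩ := hf
  obtain ⟨m, c, d, rfl, rfl, hm, hgc⟩ := hg
  replace hu := strictMonoOn_Iic_of_lt_succ hu
  replace hm := strictMonoOn_Iic_of_lt_succ hm
  have hJ : MonotoneOn (pieceIndex m l) (Ioc (m 0) (m l)) := pieceIndex_mono.monotoneOn _
  have hI : MonotoneOn (pieceIndex u k ∘ g) (Ioc (m 0) (m l)) :=
    pieceIndex_mono.comp_monotoneOn hgmono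
  refine exists_isPiecewiseLinearOn_le_of_levelSets (n := 1)
    (hm.monotoneOn (by simp) self_mem_Iic (Nat.zero_le l)) (hJ.add hI) (fun x hx => ?_)
    (fun x hx => exists_max_levelSet_pieceIndex_add hu hm hgc hgmono hrange hx)
    (fun x hx => ?_)
  · have := (one_le_pieceIndex_and_mem_Ioc hx).1
    have := (pieceIndex_le : pieceIndex m l x ≤ l)
    have := (pieceIndex_le : pieceIndex u k (g x) ≤ k)
    simp only [Function.comp_apply, mem_Ico]
    omega
  · refine ⟨a (pieceIndex u k (g x)) * c (pieceIndex m l x),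
      a (pieceIndex u k (g x)) * d (pieceIndex m l x) + b (pieceIndex u k (g x)),
      fun y hy hyx => ?_⟩
    obtain ⟨hyJ, hyI⟩ := hJ.eq_and_eq_of_add_eq hI hy hx hyx
    simp only [Function.comp_apply] at hyI ⊢
    rw [eq_affine_pieceIndex hfa (hrange hy), hyI, eq_affine_pieceIndex hgc hy, hyJ]
    ring

/-- Closure under composition (needed by the FDSB algorithm, Section 3.5): the
composition of a `k`-piecewise linear function with a monotone non-decreasing
`l`-piecewise linear function whose range lies in the domain of the former is
piecewise linear with at most `k + l` segments. -/
theorem stmt_13 (f g : ℝ → ℝ) (k l : ℕ) (hk : 1 ≤ k) (hl : 1 ≤ l)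
    (u₀ uk m₀ ml : ℝ)
    (hf : IsPiecewiseLinearOn f u₀ uk k)
    (hg : IsPiecewiseLinearOn g m₀ ml l)
    (hgmono : MonotoneOn g (Set.Ioc m₀ ml))
    (hrange : Set.MapsTo g (Set.Ioc m₀ ml) (Set.Ioc u₀ uk)) :
    ∃ k' ≤ k + l, IsPiecewiseLinearOn (f ∘ g) m₀ ml k' :=
  stmt_13_general f g k l u₀ uk m₀ ml hf hg hgmono hrange
end
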